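/- arXiv:2206.02401 — 2 statements merged into one kernel-verified Lean document; each statement's English description precedes it below -/
import Mathlib

section
/- Let S be a scheme and let Sch_{/S} denote the category of separated S-schemes of finite type. For m ≥ 0 let Δ^m_S := S ×_{Spec ℤ} Spec(ℤ[x₀,…,x_m]/(1 − Σᵢ xᵢ)); these assemble into a cosimplicial S-scheme, where a monotone map φ : [m] → [n] acts by xᵢ ↦ Σ_{j ∈ φ⁻¹(i)} x_j. For a presheaf of sets F on Sch_{/S} and T ∈ Sch_{/S}, let Sus_•(F)(T) be the simplicial set m ↦ F(T ×_S Δ^m_S). Let p : 𝔸¹_S → S be the projection and let c : F → p_*p^*F be a morphism of presheaves, i.e. a family of maps c_T : F(T) → F(T ×_S 𝔸¹_S) natural in T; for x ∈ {0,1} let e_x : p_*p^*F → F be the morphism induced by restriction along the section of 𝔸¹_S at x. Assume e₁ ∘ c = id_F. Then for every T ∈ Sch_{/S} the endomorphism of the simplicial set Sus_•(F)(T) induced by e₀ ∘ c : F → F is simplicially homotopic to the identity. Explicitly, the maps h^j_m := (a^j_m)^* ∘ c_{T×Δ^m_S} : F(T ×_S Δ^m_S) → F(T ×_S Δ^{m+1}_S)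 for 0 ≤ j ≤ m, where a^j_m : Δ^{m+1}_S → Δ^m_S ×_S 𝔸¹_S is the affine-linear S-morphism sending the vertex v^{m+1}_k to (v^m_k, 0) for k ≤ j and to (v^m_{k−1}, 1) for k > j, form a simplicial homotopy between the identity and Sus_•(e₀ ∘ c)(T). -/
open CategoryTheory CategoryTheory.Limits AlgebraicGeometry Opposite MvPolynomial

universe w

noncomputable section

/-! ### The geometric simplices `Δ^m_S = S ×_{Spec ℤ} Spec (ℤ[x₀,…,x_m]/(1 − Σᵢ xᵢ))` -/

/-- The ideal `(1 − Σᵢ xᵢ)` of `ℤ[x₀,…,x_m]`. -/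
def simplexIdeal (m : ℕ) : Ideal (MvPolynomial (Fin (m + 1)) ℤ) :=
  Ideal.span {(1 : MvPolynomial (Fin (m + 1)) ℤ) - ∑ i, X i}

/-- The coordinate ring `ℤ[x₀,…,x_m]/(1 − Σᵢ xᵢ)` of the geometric `m`-simplex. -/
abbrev simplexRing (m : ℕ) : Type :=
  MvPolynomial (Fin (m + 1)) ℤ ⧸ simplexIdeal m

/-- The ring homomorphism `ℤ[x₀,…,x_n]/(1−Σx) → ℤ[y₀,…,y_m]/(1−Σy)` sending `xᵢ` to
`Σ_{j ∈ φ⁻¹(i)} y_j`, for a monotone vertex map `φ : [m] → [n]`. -/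
def simplexRingMap {m n : ℕ} (φ : Fin (m + 1) →o Fin (n + 1)) :
    simplexRing n →+* simplexRing m :=
  Ideal.Quotient.lift (simplexIdeal n)
    ((aeval (R := ℤ) fun i : Fin (n + 1) =>
      Ideal.Quotient.mk (simplexIdeal m) (∑ j ∈ Finset.univ.filter (fun j => φ j = i),
        (X j : MvPolynomial (Fin (m + 1)) ℤ))).toRingHom)
    (by
      intro a ha
      obtain ⟨c, rfl⟩ := Ideal.mem_span_singleton'.mp ha
      rw [map_mul]
      have h0 : ((aeval (R := ℤ) fun i : Fin (n + 1) =>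
          Ideal.Quotient.mk (simplexIdeal m) (∑ j ∈ Finset.univ.filter (fun j => φ j = i),
            (X j : MvPolynomial (Fin (m + 1)) ℤ))).toRingHom)
          ((1 : MvPolynomial (Fin (n + 1)) ℤ) - ∑ i, X i) = 0 := by
        simp only [AlgHom.toRingHom_eq_coe, RingHom.coe_coe, map_sub, map_one, map_sum,
          aeval_X]
        rw [Finset.sum_fiberwise Finset.univ (fun j => φ j)
          (fun j => Ideal.Quotient.mk (simplexIdeal m) (X j))]
        rw [← map_sum (Ideal.Quotient.mk (simplexIdeal m)),
          ← map_one (Ideal.Quotient.mk (simplexIdeal m)), ← map_sub,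
          Ideal.Quotient.eq_zero_iff_mem]
        exact Ideal.subset_span rfl
      rw [h0, mul_zero])

/-- The terminal scheme `Spec ℤ`. -/
def specZ : Scheme.{0} := Spec (CommRingCat.of ℤ)

/-- The unique map to `Spec ℤ`. -/
def toSpecZ (X : Scheme.{0}) : X ⟶ specZ := specZIsTerminal.from X

/-- The structure morphism `Spec (ℤ[x₀,…,x_m]/(1−Σx)) → Spec ℤ`. -/
def specToZ (m : ℕ) : Spec (CommRingCat.of (simplexRing m)) ⟶ specZ :=
  Spec.map (CommRingCat.ofHom (Int.castRingHom (simplexRing m)))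

/-- The structure morphism `Spec ℤ[t] → Spec ℤ` of the affine line. -/
def lineToZ : Spec (CommRingCat.of (Polynomial ℤ)) ⟶ specZ :=
  Spec.map (CommRingCat.ofHom (Int.castRingHom (Polynomial ℤ)))

lemma algebraFT_simplexRing (m : ℕ) : Algebra.FiniteType ℤ (simplexRing m) :=
  Algebra.FiniteType.of_surjective
    (Ideal.Quotient.mkₐ ℤ (simplexIdeal m)) (Ideal.Quotient.mkₐ_surjective ℤ _)

lemma ringHomFT {R : Type} [CommRing R] (h : Algebra.FiniteType ℤ R) :
    RingHom.FiniteType (Int.castRingHom R) := by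
  show @Algebra.FiniteType ℤ R _ _ (Int.castRingHom R).toAlgebra
  convert h using 2
  exact Subsingleton.elim _ _

lemma lft_specToZ (m : ℕ) : LocallyOfFiniteType (specToZ m) :=
  (HasRingHomProperty.Spec_iff (P := @LocallyOfFiniteType)).mpr
    (ringHomFT (algebraFT_simplexRing m))

lemma lft_lineToZ : LocallyOfFiniteType lineToZ :=
  (HasRingHomProperty.Spec_iff (P := @LocallyOfFiniteType)).mpr
    (ringHomFT (inferInstance : Algebra.FiniteType ℤ (Polynomial ℤ)))

variable (S : Scheme.{0})

/-- The geometric simplex `Δ^m_S := S ×_{Spec ℤ} Spec (ℤ[x₀,…,x_m]/(1−Σx))`. -/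
def geomSimplex (m : ℕ) : Scheme.{0} :=
  pullback (toSpecZ S) (specToZ m)

/-- The projection `Δ^m_S → S`. -/
def geomSimplexProj (m : ℕ) : geomSimplex S m ⟶ S :=
  pullback.fst (toSpecZ S) (specToZ m)

/-- The morphism `Δ^m_S → Δ^n_S` induced by a monotone vertex map `φ : [m] → [n]`,
acting on coordinates by `xᵢ ↦ Σ_{j ∈ φ⁻¹(i)} x_j`. -/
def geomSimplexMap {m n : ℕ} (φ : Fin (m + 1) →o Fin (n + 1)) :
    geomSimplex S m ⟶ geomSimplex S n :=
  pullback.map (toSpecZ S) (specToZ m) (toSpecZ S) (specToZ n)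
    (𝟙 S) (Spec.map (CommRingCat.ofHom (simplexRingMap φ))) (𝟙 specZ)
    (by simp) (specZIsTerminal.hom_ext _ _)

@[simp] lemma geomSimplexMap_proj {m n : ℕ} (φ : Fin (m + 1) →o Fin (n + 1)) :
    geomSimplexMap S φ ≫ geomSimplexProj S n = geomSimplexProj S m := by
  unfold geomSimplexMap geomSimplexProj
  first
    | (rw [pullback.lift_fst, Category.comp_id])
    | (erw [pullback.lift_fst, Category.comp_id])
    | simp [pullback.map]

/-- The affine line `𝔸¹_S = S ×_{Spec ℤ} Spec ℤ[t]`. -/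
def affLine : Scheme.{0} := pullback (toSpecZ S) lineToZ

/-- The projection `𝔸¹_S → S`. -/
def affLineProj : affLine S ⟶ S := pullback.fst (toSpecZ S) lineToZ

/-- The section of `𝔸¹_S → S` at the integral point `x`. -/
def affLineSection (x : ℤ) : S ⟶ affLine S :=
  pullback.lift (𝟙 S) (toSpecZ S ≫ Spec.map (CommRingCat.ofHom (Polynomial.evalRingHom x)))
    (specZIsTerminal.hom_ext _ _)

@[simp] lemma affLineSection_proj (x : ℤ) : affLineSection S x ≫ affLineProj S = 𝟙 S :=
  pullback.lift_fst _ _ _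

/-- The element `Σ_{k > j} x_k` of the simplex coordinate ring. -/
def tailSum {m : ℕ} (j : Fin (m + 1)) : simplexRing (m + 1) :=
  Ideal.Quotient.mk (simplexIdeal (m + 1))
    (∑ k ∈ Finset.univ.filter (fun k => j.castSucc < k), X k)

/-- The morphism `Δ^{m+1}_S → 𝔸¹_S` given on coordinates by `t ↦ Σ_{k > j} x_k`. -/
def simplexToLine {m : ℕ} (j : Fin (m + 1)) : geomSimplex S (m + 1) ⟶ affLine S :=
  pullback.map (toSpecZ S) (specToZ (m + 1)) (toSpecZ S) lineToZ
    (𝟙 S) (Spec.map (CommRingCat.ofHom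
      (Polynomial.eval₂RingHom (Int.castRingHom (simplexRing (m + 1))) (tailSum j))))
    (𝟙 specZ) (by simp) (specZIsTerminal.hom_ext _ _)

@[simp] lemma simplexToLine_proj {m : ℕ} (j : Fin (m + 1)) :
    simplexToLine S j ≫ affLineProj S = geomSimplexProj S (m + 1) := by
  unfold simplexToLine affLineProj geomSimplexProj
  first
    | (rw [pullback.lift_fst, Category.comp_id])
    | (erw [pullback.lift_fst, Category.comp_id])
    | simp [pullback.map]

/-- The product `X ×_S Δ^m_S` of an `S`-scheme with the geometric simplex. -/
def prodSimplex {X : Scheme.{0}} (xS : X ⟶ S) (m : ℕ) : Scheme.{0} :=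
  pullback xS (geomSimplexProj S m)

/-- The structure morphism `X ×_S Δ^m_S → S`. -/
def prodSimplexStruct {X : Scheme.{0}} (xS : X ⟶ S) (m : ℕ) : prodSimplex S xS m ⟶ S :=
  pullback.fst xS (geomSimplexProj S m) ≫ xS

/-- The morphism `X ×_S Δ^m_S → X ×_S Δ^n_S` induced by a monotone vertex map
`φ : [m] → [n]`. -/
def prodSimplexMap {X : Scheme.{0}} (xS : X ⟶ S) {m n : ℕ}
    (φ : Fin (m + 1) →o Fin (n + 1)) : prodSimplex S xS m ⟶ prodSimplex S xS n :=
  pullback.map xS (geomSimplexProj S m) xS (geomSimplexProj S n)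
    (𝟙 X) (geomSimplexMap S φ) (𝟙 S) (by simp) (by simp)

@[simp] lemma prodSimplexMap_struct {X : Scheme.{0}} (xS : X ⟶ S) {m n : ℕ}
    (φ : Fin (m + 1) →o Fin (n + 1)) :
    prodSimplexMap S xS φ ≫ prodSimplexStruct S xS n = prodSimplexStruct S xS m := by
  unfold prodSimplexMap prodSimplexStruct
  first
    | (rw [← Category.assoc, pullback.lift_fst, Category.comp_id])
    | (erw [← Category.assoc, pullback.lift_fst, Category.comp_id])
    | (simp only [← Category.assoc]; erw [pullback.lift_fst]; simp)

/-- The product `Z ×_S 𝔸¹_S` of an `S`-scheme with the affine line. -/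
def prodLine {Z : Scheme.{0}} (zS : Z ⟶ S) : Scheme.{0} :=
  pullback zS (affLineProj S)

/-- The structure morphism `Z ×_S 𝔸¹_S → S`. -/
def prodLineStruct {Z : Scheme.{0}} (zS : Z ⟶ S) : prodLine S zS ⟶ S :=
  pullback.fst zS (affLineProj S) ≫ zS

/-- The morphism `Z' ×_S 𝔸¹_S → Z ×_S 𝔸¹_S` induced by an `S`-morphism `h : Z' → Z`. -/
def prodLineMap {Z' Z : Scheme.{0}} {z'S : Z' ⟶ S} {zS : Z ⟶ S} (h : Z' ⟶ Z)
    (hh : h ≫ zS = z'S) : prodLine S z'S ⟶ prodLine S zS :=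
  pullback.map z'S (affLineProj S) zS (affLineProj S) h (𝟙 _) (𝟙 S)
    (by simp [hh]) (by simp)

/-- The section `Z → Z ×_S 𝔸¹_S` at the point `x ∈ {0, 1}` of the affine line. -/
def prodLineSection {Z : Scheme.{0}} (zS : Z ⟶ S) (x : ℤ) : Z ⟶ prodLine S zS :=
  pullback.lift (𝟙 Z) (zS ≫ affLineSection S x) (by simp)

/-- The affine-linear morphism `a^j_m : X ×_S Δ^{m+1}_S → (X ×_S Δ^m_S) ×_S 𝔸¹_S` sending
the vertex `v^{m+1}_k` to `(v^m_k, 0)` for `k ≤ j` and to `(v^m_{k−1}, 1)` for `k > j`: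
its `Δ^m`-component is induced by the vertex map of the degeneracy `σ_j` and its
`𝔸¹`-component by `t ↦ Σ_{k>j} x_k`. -/
def aSchemeMap {X : Scheme.{0}} (xS : X ⟶ S) {m : ℕ} (j : Fin (m + 1)) :
    prodSimplex S xS (m + 1) ⟶ prodLine S (prodSimplexStruct S xS m) :=
  pullback.lift
    (prodSimplexMap S xS ⟨j.predAbove, Fin.predAbove_right_monotone j⟩)
    (pullback.snd xS (geomSimplexProj S (m + 1)) ≫ simplexToLine S j)
    (by
      first
        | (erw [prodSimplexMap_struct, Category.assoc, simplexToLine_proj]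
           exact pullback.condition)
        | (rw [prodSimplexMap_struct, prodSimplexStruct]
           erw [Category.assoc, simplexToLine_proj]
           exact pullback.condition))

/-! ### The category `Sch_{/S}` of separated finite-type `S`-schemes -/

/-- Being separated and of finite type over `S`. -/
def GoodOver {X : Scheme.{0}} (xS : X ⟶ S) : Prop :=
  IsSeparated xS ∧ LocallyOfFiniteType xS ∧ QuasiCompact xS

/-- The category of separated `S`-schemes of finite type. -/
def SchOver : Type 1 := ObjectProperty.FullSubcategory (fun X : Over S => GoodOver S X.hom)

instance : Category (SchOver S) := ObjectProperty.FullSubcategory.category _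

/-- Constructor for objects of `Sch_{/S}`. -/
def schOverMk {X : Scheme.{0}} (xS : X ⟶ S) (h : GoodOver S xS) : SchOver S :=
  ⟨Over.mk xS, h⟩

lemma goodOver_prodSimplexStruct {X : Scheme.{0}} {xS : X ⟶ S} (h : GoodOver S xS) (m : ℕ) :
    GoodOver S (prodSimplexStruct S xS m) := by
  obtain ⟨h1, h2, h3⟩ := h
  have a0 : IsAffine specZ := by unfold specZ; infer_instance
  have a1 : IsAffineHom (specToZ m) := isAffineHom_of_isAffine (f := specToZ m)
  have s1 : IsSeparated (specToZ m) := IsSeparated.of_isAffineHom (f := specToZ m)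
  have q1 : QuasiCompact (specToZ m) := inferInstance
  have g1 : IsSeparated (geomSimplexProj S m) :=
    IsSeparated.isStableUnderBaseChange.1 (IsPullback.of_hasPullback (toSpecZ S) (specToZ m)).flip s1
  have g2 : LocallyOfFiniteType (geomSimplexProj S m) :=
    locallyOfFiniteType_isStableUnderBaseChange.1
      (IsPullback.of_hasPullback (toSpecZ S) (specToZ m)).flip (lft_specToZ m)
  have g3 : QuasiCompact (geomSimplexProj S m) :=
    quasiCompact_isStableUnderBaseChange.1 (IsPullback.of_hasPullback (toSpecZ S) (specToZ m)).flip q1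
  have f1 : IsSeparated (pullback.fst xS (geomSimplexProj S m)) :=
    IsSeparated.isStableUnderBaseChange.1 (IsPullback.of_hasPullback xS (geomSimplexProj S m)).flip g1
  have f2 : LocallyOfFiniteType (pullback.fst xS (geomSimplexProj S m)) :=
    locallyOfFiniteType_isStableUnderBaseChange.1 (IsPullback.of_hasPullback xS (geomSimplexProj S m)).flip g2
  have f3 : QuasiCompact (pullback.fst xS (geomSimplexProj S m)) :=
    quasiCompact_isStableUnderBaseChange.1 (IsPullback.of_hasPullback xS (geomSimplexProj S m)).flip g3
  refine ⟨?_, ?_, ?_⟩ <;> unfold prodSimplexStruct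
  · exact IsSeparated.stableUnderComposition.1 _ _ f1 h1
  · exact @locallyOfFiniteType_comp _ _ _ _ _ f2 h2
  · exact @quasiCompact_comp _ _ _ _ _ f3 h3

lemma goodOver_prodLineStruct {Z : Scheme.{0}} {zS : Z ⟶ S} (h : GoodOver S zS) :
    GoodOver S (prodLineStruct S zS) := by
  obtain ⟨h1, h2, h3⟩ := h
  have a0 : IsAffine specZ := by unfold specZ; infer_instance
  have a1 : IsAffineHom (lineToZ) := isAffineHom_of_isAffine (f := lineToZ)
  have s1 : IsSeparated (lineToZ) := IsSeparated.of_isAffineHom (f := lineToZ)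
  have q1 : QuasiCompact (lineToZ) := inferInstance
  have g1 : IsSeparated (affLineProj S) :=
    IsSeparated.isStableUnderBaseChange.1 (IsPullback.of_hasPullback (toSpecZ S) (lineToZ)).flip s1
  have g2 : LocallyOfFiniteType (affLineProj S) :=
    locallyOfFiniteType_isStableUnderBaseChange.1
      (IsPullback.of_hasPullback (toSpecZ S) (lineToZ)).flip lft_lineToZ
  have g3 : QuasiCompact (affLineProj S) :=
    quasiCompact_isStableUnderBaseChange.1 (IsPullback.of_hasPullback (toSpecZ S) (lineToZ)).flip q1
  have f1 : IsSeparated (pullback.fst zS (affLineProj S)) :=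
    IsSeparated.isStableUnderBaseChange.1 (IsPullback.of_hasPullback zS (affLineProj S)).flip g1
  have f2 : LocallyOfFiniteType (pullback.fst zS (affLineProj S)) :=
    locallyOfFiniteType_isStableUnderBaseChange.1 (IsPullback.of_hasPullback zS (affLineProj S)).flip g2
  have f3 : QuasiCompact (pullback.fst zS (affLineProj S)) :=
    quasiCompact_isStableUnderBaseChange.1 (IsPullback.of_hasPullback zS (affLineProj S)).flip g3
  refine ⟨?_, ?_, ?_⟩ <;> unfold prodLineStruct
  · exact IsSeparated.stableUnderComposition.1 _ _ f1 h1
  · exact @locallyOfFiniteType_comp _ _ _ _ _ f2 h2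
  · exact @quasiCompact_comp _ _ _ _ _ f3 h3

variable {S}

@[simp] lemma prodLineMap_struct {Z' Z : Scheme.{0}} {z'S : Z' ⟶ S} {zS : Z ⟶ S}
    (f : Z' ⟶ Z) (hf : f ≫ zS = z'S) :
    prodLineMap S f hf ≫ prodLineStruct S zS = prodLineStruct S z'S := by
  unfold prodLineMap prodLineStruct
  erw [← Category.assoc, pullback.lift_fst, Category.assoc, hf]

@[simp] lemma prodLineSection_struct {Z : Scheme.{0}} (zS : Z ⟶ S) (x : ℤ) :
    prodLineSection S zS x ≫ prodLineStruct S zS = zS := by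
  unfold prodLineSection prodLineStruct
  erw [← Category.assoc, pullback.lift_fst, Category.id_comp]

@[simp] lemma aSchemeMap_struct {X : Scheme.{0}} (xS : X ⟶ S) {m : ℕ} (j : Fin (m + 1)) :
    aSchemeMap S xS j ≫ prodLineStruct S (prodSimplexStruct S xS m) =
      prodSimplexStruct S xS (m + 1) := by
  unfold aSchemeMap prodLineStruct
  erw [← Category.assoc, pullback.lift_fst, prodSimplexMap_struct]

/-- The object `T ×_S Δ^m_S` of `Sch_{/S}`. -/
def TDobj (T : SchOver S) (m : ℕ) : SchOver S :=
  schOverMk S (prodSimplexStruct S T.obj.hom m) (goodOver_prodSimplexStruct S T.property m)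

/-- The object `Z ×_S 𝔸¹_S` of `Sch_{/S}` (i.e. the value at `Z` of `p^* p_*`). -/
def TAobj (Z : SchOver S) : SchOver S :=
  schOverMk S (prodLineStruct S Z.obj.hom) (goodOver_prodLineStruct S Z.property)

/-- The morphism `T ×_S Δ^m_S → T ×_S Δ^n_S` of `Sch_{/S}` induced by a monotone vertex map
`φ : [m] → [n]`; this gives the cosimplicial structure. -/
def TDhom (T : SchOver S) {m n : ℕ} (φ : Fin (m + 1) →o Fin (n + 1)) :
    TDobj T m ⟶ TDobj T n :=
  ObjectProperty.homMk (Over.homMk (prodSimplexMap S T.obj.hom φ) (prodSimplexMap_struct S T.obj.hom φ))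

/-- The morphism `Z' ×_S 𝔸¹_S → Z ×_S 𝔸¹_S` induced by a morphism of `Sch_{/S}`. -/
def TAhom {Z' Z : SchOver S} (f : Z' ⟶ Z) : TAobj Z' ⟶ TAobj Z :=
  ObjectProperty.homMk (Over.homMk (prodLineMap S f.hom.left (Over.w f.hom))
    (prodLineMap_struct f.hom.left (Over.w f.hom)))

/-- The section `Z → Z ×_S 𝔸¹_S` at the point `x` of the affine line. -/
def TAsection (Z : SchOver S) (x : ℤ) : Z ⟶ TAobj Z :=
  ObjectProperty.homMk (Over.homMk (prodLineSection S Z.obj.hom x) (prodLineSection_struct Z.obj.hom x))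

/-- The deformation `a^j_m : T ×_S Δ^{m+1}_S → (T ×_S Δ^m_S) ×_S 𝔸¹_S` as a morphism of
`Sch_{/S}`. -/
def aHom (T : SchOver S) {m : ℕ} (j : Fin (m + 1)) :
    TDobj T (m + 1) ⟶ TAobj (TDobj T m) :=
  ObjectProperty.homMk (Over.homMk (aSchemeMap S T.obj.hom j) (aSchemeMap_struct T.obj.hom j))

/-- The vertex map of the coface `δ_i : [m] → [m+1]` (the monotone injection skipping
`i`), inducing the face operator `dᵢ` of the Suslin complex. -/
def faceVert {m : ℕ} (i : Fin (m + 2)) : Fin (m + 1) →o Fin (m + 2) :=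
  ⟨i.succAbove, (Fin.succAboveOrderEmb i).monotone⟩

/-- The vertex map of the codegeneracy `σ_i : [m+1] → [m]`, inducing the degeneracy
operator `sᵢ` of the Suslin complex. -/
def degenVert {m : ℕ} (i : Fin (m + 1)) : Fin (m + 2) →o Fin (m + 1) :=
  ⟨i.predAbove, Fin.predAbove_right_monotone i⟩


/-! ### Auxiliary lemmas for Statement 5 -/

section Stmt5Aux

lemma hcomp1 {C : Type*} [Category C] {A B X D : C} {f : A ⟶ B} {g : B ⟶ X} {p : X ⟶ D}
    {q : B ⟶ D} {r : A ⟶ D} (h1 : g ≫ p = q) (h2 : f ≫ q = r) : (f ≫ g) ≫ p = r := by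
  rw [Category.assoc, h1, h2]

lemma hcomp2 {C : Type*} [Category C] {A B X D : C} {f : A ⟶ B} {g : B ⟶ X} {k : X ⟶ D}
    {q : A ⟶ X} {r : A ⟶ D} (h1 : f ≫ g = q) (h2 : q ≫ k = r) : f ≫ g ≫ k = r := by
  rw [← Category.assoc, h1, h2]

lemma whisk {C : Type*} [Category C] {A B X : C} {f : A ⟶ B} {g g' : B ⟶ X} (h : g = g') :
    f ≫ g = f ≫ g' := by
  rw [h]

lemma succAbove_val' {n : ℕ} (i : Fin (n + 1)) (l : Fin n) :
    (i.succAbove l).val = if l.val < i.val then l.val else l.val + 1 := by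
  rw [Fin.succAbove]
  split_ifs with h h2 h2 <;> first | rfl | (exfalso; simp [Fin.lt_def] at h; omega)

lemma predAbove_val' {n : ℕ} (j : Fin n) (k : Fin (n + 1)) :
    (j.predAbove k).val = if j.val < k.val then k.val - 1 else k.val := by
  rw [Fin.predAbove]
  split_ifs with h h2 h2 <;> first | rfl | (exfalso; simp [Fin.lt_def] at h; omega)

lemma sum_filter_fiber' {α β M : Type*} [Fintype α] [Fintype β] [DecidableEq β]
    [AddCommMonoid M] (φ : α → β) (P : β → Prop) [DecidablePred P] (f : α → M) :
    ∑ k ∈ Finset.univ.filter P, ∑ l ∈ Finset.univ.filter (fun l => φ l = k), f l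
      = ∑ l ∈ Finset.univ.filter (fun l => P (φ l)), f l := by
  rw [← Finset.sum_fiberwise_of_maps_to (g := φ) (t := Finset.univ.filter P)
      (s := Finset.univ.filter (fun l => P (φ l)))
      (fun l hl => by
        simp only [Finset.mem_filter, Finset.mem_univ, true_and] at hl ⊢; exact hl) f]
  refine Finset.sum_congr rfl fun k hk => ?_
  refine Finset.sum_congr ?_ fun _ _ => rfl
  ext l
  simp only [Finset.mem_filter, Finset.mem_univ, true_and] at hk ⊢
  exact ⟨fun hl => ⟨hl ▸ hk, hl⟩, fun hl => hl.2⟩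

lemma simplexRingMap_mk {m n : ℕ} (φ : Fin (m + 1) →o Fin (n + 1))
    (p : MvPolynomial (Fin (n + 1)) ℤ) :
    simplexRingMap φ (Ideal.Quotient.mk _ p) =
      aeval (R := ℤ) (fun i : Fin (n + 1) =>
        Ideal.Quotient.mk (simplexIdeal m) (∑ j ∈ Finset.univ.filter (fun j => φ j = i),
          (X j : MvPolynomial (Fin (m + 1)) ℤ))) p :=
  Ideal.Quotient.lift_mk _ _ _

lemma simplexRing_hom_ext {n : ℕ} {R : Type*} [CommRing R] {f g : simplexRing n →+* R}
    (h : ∀ i, f (Ideal.Quotient.mk _ (X i)) = g (Ideal.Quotient.mk _ (X i))) : f = g := by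
  apply Ideal.Quotient.ringHom_ext
  apply MvPolynomial.ringHom_ext'
  · exact Subsingleton.elim _ _
  · exact h

lemma simplexRingMap_mk_X {m n : ℕ} (φ : Fin (m + 1) →o Fin (n + 1)) (i : Fin (n + 1)) :
    simplexRingMap φ (Ideal.Quotient.mk _ (X i)) =
      Ideal.Quotient.mk (simplexIdeal m)
        (∑ j ∈ Finset.univ.filter (fun j => φ j = i), X j) := by
  rw [simplexRingMap_mk, aeval_X]

set_option synthInstance.maxHeartbeats 1000000 in
lemma simplexRingMap_mk_sum {m n : ℕ} (φ : Fin (m + 1) →o Fin (n + 1))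
    (s : Finset (Fin (n + 1))) :
    simplexRingMap φ (Ideal.Quotient.mk _ (∑ k ∈ s, X k)) =
      Ideal.Quotient.mk (simplexIdeal m)
        (∑ k ∈ s, ∑ j ∈ Finset.univ.filter (fun j => φ j = k), X j) := by
  simp only [map_sum]
  exact Finset.sum_congr rfl fun k _ => (simplexRingMap_mk_X φ k).trans (map_sum _ _ _)

lemma simplexRingMap_comp {m n p : ℕ} (φ : Fin (m + 1) →o Fin (n + 1))
    (ψ : Fin (n + 1) →o Fin (p + 1)) :
    (simplexRingMap φ).comp (simplexRingMap ψ) = simplexRingMap (ψ.comp φ) := by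
  apply simplexRing_hom_ext
  intro i
  rw [RingHom.comp_apply, simplexRingMap_mk_X, simplexRingMap_mk_sum, simplexRingMap_mk_X]
  congr 1
  rw [sum_filter_fiber' (fun l => φ l) (fun k => ψ k = i)]
  rfl

lemma simplexRingMap_id {m : ℕ} :
    simplexRingMap (OrderHom.id : Fin (m + 1) →o Fin (m + 1)) = RingHom.id _ := by
  apply simplexRing_hom_ext
  intro i
  rw [simplexRingMap_mk_X, RingHom.id_apply]
  congr 1
  rw [show (Finset.univ.filter (fun j : Fin (m + 1) => OrderHom.id j = i)) = {i} by
    ext l; simp [eq_comm]]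
  exact Finset.sum_singleton _ _

lemma simplexRingMap_tailSum {p m : ℕ} (φ : Fin (p + 1) →o Fin (m + 2)) (j : Fin (m + 1)) :
    simplexRingMap φ (tailSum j) =
      Ideal.Quotient.mk (simplexIdeal p)
        (∑ l ∈ Finset.univ.filter (fun l => j.castSucc < φ l), X l) := by
  rw [tailSum, simplexRingMap_mk_sum]
  rw [sum_filter_fiber' (fun l => φ l) (fun k => j.castSucc < k)]

lemma polyComp_eval₂ {A B : Type} [CommRing A] [CommRing B] (f : A →+* B) (t : A) :
    f.comp (Polynomial.eval₂RingHom (Int.castRingHom A) t)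
      = Polynomial.eval₂RingHom (Int.castRingHom B) (f t) := by
  apply Polynomial.ringHom_ext'
  · exact Subsingleton.elim _ _
  · simp [Polynomial.coe_eval₂RingHom]

lemma intCast_comp_eval {M : Type} [CommRing M] (x : ℤ) :
    (Int.castRingHom M).comp (Polynomial.evalRingHom x)
      = Polynomial.eval₂RingHom (Int.castRingHom M) ((x : ℤ) : M) := by
  apply Polynomial.ringHom_ext'
  · exact Subsingleton.elim _ _
  · simp

variable (S)

/-- The morphism `Δ^M_S → 𝔸¹_S` with `t`-coordinate a given element of the simplex ring. -/
def toLineAux (M : ℕ) (t : simplexRing M) : geomSimplex S M ⟶ affLine S :=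
  pullback.map (toSpecZ S) (specToZ M) (toSpecZ S) lineToZ
    (𝟙 S) (Spec.map (CommRingCat.ofHom
      (Polynomial.eval₂RingHom (Int.castRingHom (simplexRing M)) t)))
    (𝟙 specZ) (by simp) (specZIsTerminal.hom_ext _ _)

lemma simplexToLine_eq {m : ℕ} (j : Fin (m + 1)) :
    simplexToLine S j = toLineAux S (m + 1) (tailSum j) := rfl

lemma geomSimplexMap_fst {m n : ℕ} (φ : Fin (m + 1) →o Fin (n + 1)) :
    geomSimplexMap S φ ≫ pullback.fst (toSpecZ S) (specToZ n) =
      pullback.fst (toSpecZ S) (specToZ m) :=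
  (pullback.lift_fst _ _ _).trans (Category.comp_id _)

lemma geomSimplexMap_snd {m n : ℕ} (φ : Fin (m + 1) →o Fin (n + 1)) :
    geomSimplexMap S φ ≫ pullback.snd (toSpecZ S) (specToZ n) =
      pullback.snd (toSpecZ S) (specToZ m) ≫ Spec.map (CommRingCat.ofHom (simplexRingMap φ)) :=
  pullback.lift_snd _ _ _

lemma toLineAux_fst (M : ℕ) (t : simplexRing M) :
    toLineAux S M t ≫ pullback.fst (toSpecZ S) lineToZ = pullback.fst (toSpecZ S) (specToZ M) :=
  (pullback.lift_fst _ _ _).trans (Category.comp_id _)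

lemma toLineAux_snd (M : ℕ) (t : simplexRing M) :
    toLineAux S M t ≫ pullback.snd (toSpecZ S) lineToZ =
      pullback.snd (toSpecZ S) (specToZ M) ≫ Spec.map (CommRingCat.ofHom
        (Polynomial.eval₂RingHom (Int.castRingHom (simplexRing M)) t)) :=
  pullback.lift_snd _ _ _

lemma geomSimplexMap_comp {m n p : ℕ} (φ : Fin (m + 1) →o Fin (n + 1))
    (ψ : Fin (n + 1) →o Fin (p + 1)) :
    geomSimplexMap S φ ≫ geomSimplexMap S ψ = geomSimplexMap S (ψ.comp φ) := by
  apply pullback.hom_ext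
  · erw [Category.assoc, geomSimplexMap_fst, geomSimplexMap_fst, geomSimplexMap_fst]
  · erw [Category.assoc, geomSimplexMap_snd, ← Category.assoc, geomSimplexMap_snd, Category.assoc,
      ← Spec.map_comp, geomSimplexMap_snd, ← CommRingCat.ofHom_comp, simplexRingMap_comp]
    rfl

lemma geomSimplexMap_id {m : ℕ} :
    geomSimplexMap S (OrderHom.id : Fin (m + 1) →o Fin (m + 1)) = 𝟙 _ := by
  apply pullback.hom_ext
  · erw [geomSimplexMap_fst, Category.id_comp]
  · have h : CommRingCat.ofHom (simplexRingMap (OrderHom.id : Fin (m + 1) →o Fin (m + 1)))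
        = 𝟙 (CommRingCat.of (simplexRing m)) := by
      rw [simplexRingMap_id]; rfl
    erw [geomSimplexMap_snd, h, Spec.map_id, Category.comp_id]

lemma geomSimplexMap_toLine {m n : ℕ} (φ : Fin (m + 1) →o Fin (n + 1)) (t : simplexRing n) :
    geomSimplexMap S φ ≫ toLineAux S n t = toLineAux S m (simplexRingMap φ t) := by
  apply pullback.hom_ext
  · exact hcomp1 (toLineAux_fst S n t) ((geomSimplexMap_fst S φ).trans (toLineAux_fst S m _).symm)
  · exact hcomp1 (toLineAux_snd S n t) (hcomp2 (geomSimplexMap_snd S φ)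
      (((Category.assoc _ _ _).trans (whisk ((Spec.map_comp _ _).symm.trans
        (congrArg Spec.map ((CommRingCat.ofHom_comp _ _).symm.trans
          (congrArg CommRingCat.ofHom (polyComp_eval₂ (simplexRingMap φ) t))))))).trans
        (toLineAux_snd S m _).symm))

lemma toLine_intCast (M : ℕ) (x : ℤ) :
    toLineAux S M ((x : ℤ) : simplexRing M) = geomSimplexProj S M ≫ affLineSection S x := by
  apply pullback.hom_ext
  · erw [toLineAux_fst, Category.assoc,
      show affLineSection S x ≫ pullback.fst (toSpecZ S) lineToZ = 𝟙 S from
        affLineSection_proj S x, Category.comp_id]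
    rfl
  · erw [toLineAux_snd, Category.assoc,
      show affLineSection S x ≫ pullback.snd (toSpecZ S) lineToZ =
        toSpecZ S ≫ Spec.map (CommRingCat.ofHom (Polynomial.evalRingHom x)) from
        pullback.lift_snd _ _ _]
    unfold geomSimplexProj
    have h1 : pullback.fst (toSpecZ S) (specToZ M) ≫ toSpecZ S
        = pullback.snd (toSpecZ S) (specToZ M) ≫ specToZ M := specZIsTerminal.hom_ext _ _
    erw [← Category.assoc, h1, Category.assoc]
    unfold specToZ
    erw [← Spec.map_comp, ← CommRingCat.ofHom_comp, intCast_comp_eval]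
    rfl

variable {X' : Scheme.{0}}

lemma prodSimplexMap_fst (xS : X' ⟶ S) {m n : ℕ} (φ : Fin (m + 1) →o Fin (n + 1)) :
    prodSimplexMap S xS φ ≫ pullback.fst xS (geomSimplexProj S n) =
      pullback.fst xS (geomSimplexProj S m) :=
  (pullback.lift_fst _ _ _).trans (Category.comp_id _)

lemma prodSimplexMap_snd (xS : X' ⟶ S) {m n : ℕ} (φ : Fin (m + 1) →o Fin (n + 1)) :
    prodSimplexMap S xS φ ≫ pullback.snd xS (geomSimplexProj S n) =
      pullback.snd xS (geomSimplexProj S m) ≫ geomSimplexMap S φ :=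
  pullback.lift_snd _ _ _

lemma aSchemeMap_fst (xS : X' ⟶ S) {m : ℕ} (j : Fin (m + 1)) :
    aSchemeMap S xS j ≫ pullback.fst (prodSimplexStruct S xS m) (affLineProj S) =
      prodSimplexMap S xS ⟨j.predAbove, Fin.predAbove_right_monotone j⟩ :=
  pullback.lift_fst _ _ _

lemma aSchemeMap_snd (xS : X' ⟶ S) {m : ℕ} (j : Fin (m + 1)) :
    aSchemeMap S xS j ≫ pullback.snd (prodSimplexStruct S xS m) (affLineProj S) =
      pullback.snd xS (geomSimplexProj S (m + 1)) ≫ simplexToLine S j :=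
  pullback.lift_snd _ _ _

lemma prodLineMap_fst {Z' Z : Scheme.{0}} {z'S : Z' ⟶ S} {zS : Z ⟶ S} (f : Z' ⟶ Z)
    (hf : f ≫ zS = z'S) :
    prodLineMap S f hf ≫ pullback.fst zS (affLineProj S) = pullback.fst z'S (affLineProj S) ≫ f :=
  pullback.lift_fst _ _ _

lemma prodLineMap_snd {Z' Z : Scheme.{0}} {z'S : Z' ⟶ S} {zS : Z ⟶ S} (f : Z' ⟶ Z)
    (hf : f ≫ zS = z'S) :
    prodLineMap S f hf ≫ pullback.snd zS (affLineProj S) = pullback.snd z'S (affLineProj S) :=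
  (pullback.lift_snd _ _ _).trans (Category.comp_id _)

lemma prodLineSection_fst {Z : Scheme.{0}} (zS : Z ⟶ S) (x : ℤ) :
    prodLineSection S zS x ≫ pullback.fst zS (affLineProj S) = 𝟙 Z :=
  pullback.lift_fst _ _ _

lemma prodLineSection_snd {Z : Scheme.{0}} (zS : Z ⟶ S) (x : ℤ) :
    prodLineSection S zS x ≫ pullback.snd zS (affLineProj S) = zS ≫ affLineSection S x :=
  pullback.lift_snd _ _ _

lemma prodSimplexMap_comp (xS : X' ⟶ S) {m n p : ℕ} (φ : Fin (m + 1) →o Fin (n + 1))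
    (ψ : Fin (n + 1) →o Fin (p + 1)) :
    prodSimplexMap S xS φ ≫ prodSimplexMap S xS ψ = prodSimplexMap S xS (ψ.comp φ) := by
  apply pullback.hom_ext
  · erw [Category.assoc, prodSimplexMap_fst, prodSimplexMap_fst, prodSimplexMap_fst]
  · erw [Category.assoc, prodSimplexMap_snd, ← Category.assoc, prodSimplexMap_snd, Category.assoc,
      geomSimplexMap_comp, prodSimplexMap_snd]
    rfl

lemma prodSimplexMap_id (xS : X' ⟶ S) {m : ℕ} :
    prodSimplexMap S xS (OrderHom.id : Fin (m + 1) →o Fin (m + 1)) = 𝟙 _ := by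
  apply pullback.hom_ext
  · erw [prodSimplexMap_fst, Category.id_comp]
  · erw [prodSimplexMap_snd, geomSimplexMap_id, Category.comp_id]

lemma key1 (xS : X' ⟶ S) {p q : ℕ} (φ : Fin (p + 2) →o Fin (q + 2)) (j : Fin (q + 1))
    (ψ : Fin (p + 1) →o Fin (q + 1)) (j' : Fin (p + 1))
    (hvert : (degenVert j).comp φ = ψ.comp (degenVert j'))
    (hline : simplexRingMap φ (tailSum j) = tailSum j')
    (hh : prodSimplexMap S xS ψ ≫ prodSimplexStruct S xS q = prodSimplexStruct S xS p) :
    prodSimplexMap S xS φ ≫ aSchemeMap S xS j =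
      aSchemeMap S xS j' ≫ prodLineMap S (prodSimplexMap S xS ψ) hh := by
  apply pullback.hom_ext
  · exact (hcomp1 (aSchemeMap_fst S xS j) ((prodSimplexMap_comp S xS _ _).trans
      ((congrArg (prodSimplexMap S xS) hvert).trans (prodSimplexMap_comp S xS _ _).symm))).trans
      (hcomp1 (prodLineMap_fst S _ hh) (hcomp2 (aSchemeMap_fst S xS j') rfl)).symm
  · exact (hcomp1 (aSchemeMap_snd S xS j) (hcomp2 (prodSimplexMap_snd S xS φ)
      ((Category.assoc _ _ _).trans (whisk ((geomSimplexMap_toLine S φ (tailSum j)).trans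
        (congrArg (toLineAux S (p + 1)) hline)))))).trans
      (hcomp1 (prodLineMap_snd S _ hh) (aSchemeMap_snd S xS j')).symm

lemma key2 (xS : X' ⟶ S) {m : ℕ} (φ : Fin (m + 1) →o Fin (m + 2)) (j : Fin (m + 1)) (x : ℤ)
    (hvert : (degenVert j).comp φ = OrderHom.id)
    (hline : simplexRingMap φ (tailSum j) = ((x : ℤ) : simplexRing m)) :
    prodSimplexMap S xS φ ≫ aSchemeMap S xS j =
      prodLineSection S (prodSimplexStruct S xS m) x := by
  apply pullback.hom_ext
  · exact (hcomp1 (aSchemeMap_fst S xS j) ((prodSimplexMap_comp S xS _ _).trans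
      ((congrArg (prodSimplexMap S xS) hvert).trans (prodSimplexMap_id S xS)))).trans
      (prodLineSection_fst S _ x).symm
  · exact (hcomp1 (aSchemeMap_snd S xS j) (hcomp2 (prodSimplexMap_snd S xS φ)
      ((Category.assoc _ _ _).trans (whisk ((geomSimplexMap_toLine S φ (tailSum j)).trans
        ((congrArg (toLineAux S m) hline).trans (toLine_intCast S m x))))))).trans
      (((pullback.condition_assoc _).symm.trans (Category.assoc _ _ _).symm).trans
        (prodLineSection_snd S _ x).symm)

lemma key3 (xS : X' ⟶ S) {p m : ℕ} (φ₁ φ₂ : Fin (p + 1) →o Fin (m + 2)) (j₁ j₂ : Fin (m + 1))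
    (hvert : (degenVert j₁).comp φ₁ = (degenVert j₂).comp φ₂)
    (hline : simplexRingMap φ₁ (tailSum j₁) = simplexRingMap φ₂ (tailSum j₂)) :
    prodSimplexMap S xS φ₁ ≫ aSchemeMap S xS j₁
      = prodSimplexMap S xS φ₂ ≫ aSchemeMap S xS j₂ := by
  apply pullback.hom_ext
  · exact (hcomp1 (aSchemeMap_fst S xS j₁) ((prodSimplexMap_comp S xS _ _).trans
      ((congrArg (prodSimplexMap S xS) hvert).trans (prodSimplexMap_comp S xS _ _).symm))).trans
      (hcomp1 (aSchemeMap_fst S xS j₂) rfl).symm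
  · exact (hcomp1 (aSchemeMap_snd S xS j₁) (hcomp2 (prodSimplexMap_snd S xS φ₁)
      ((Category.assoc _ _ _).trans (whisk ((geomSimplexMap_toLine S φ₁ (tailSum j₁)).trans
        ((congrArg (toLineAux S p) hline).trans
          (geomSimplexMap_toLine S φ₂ (tailSum j₂)).symm)))))).trans
      (hcomp1 (aSchemeMap_snd S xS j₂) (hcomp2 (prodSimplexMap_snd S xS φ₂)
        (Category.assoc _ _ _))).symm

variable {S}

lemma key1_over (T : SchOver S) {p q : ℕ} (φ : Fin (p + 2) →o Fin (q + 2)) (j : Fin (q + 1))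
    (ψ : Fin (p + 1) →o Fin (q + 1)) (j' : Fin (p + 1))
    (hvert : (degenVert j).comp φ = ψ.comp (degenVert j'))
    (hline : simplexRingMap φ (tailSum j) = tailSum j') :
    TDhom T φ ≫ aHom T j = aHom T j' ≫ TAhom (TDhom T ψ) := by
  apply ObjectProperty.hom_ext
  apply Over.OverMorphism.ext
  exact key1 S T.obj.hom φ j ψ j' hvert hline (prodSimplexMap_struct S T.obj.hom ψ)

lemma key2_over (T : SchOver S) {m : ℕ} (φ : Fin (m + 1) →o Fin (m + 2)) (j : Fin (m + 1))
    (x : ℤ) (hvert : (degenVert j).comp φ = OrderHom.id)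
    (hline : simplexRingMap φ (tailSum j) = ((x : ℤ) : simplexRing m)) :
    TDhom T φ ≫ aHom T j = TAsection (TDobj T m) x := by
  apply ObjectProperty.hom_ext
  apply Over.OverMorphism.ext
  exact key2 S T.obj.hom φ j x hvert hline

lemma key3_over (T : SchOver S) {p m : ℕ} (φ₁ φ₂ : Fin (p + 1) →o Fin (m + 2))
    (j₁ j₂ : Fin (m + 1))
    (hvert : (degenVert j₁).comp φ₁ = (degenVert j₂).comp φ₂)
    (hline : simplexRingMap φ₁ (tailSum j₁) = simplexRingMap φ₂ (tailSum j₂)) :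
    TDhom T φ₁ ≫ aHom T j₁ = TDhom T φ₂ ≫ aHom T j₂ := by
  apply ObjectProperty.hom_ext
  apply Over.OverMorphism.ext
  exact key3 S T.obj.hom φ₁ φ₂ j₁ j₂ hvert hline

lemma faceVert_apply {m : ℕ} (i : Fin (m + 2)) (k : Fin (m + 1)) :
    faceVert i k = i.succAbove k := rfl

lemma degenVert_apply {m : ℕ} (i : Fin (m + 1)) (k : Fin (m + 2)) :
    degenVert i k = i.predAbove k := rfl

/-! vertex-map identities -/

lemma hvA {m : ℕ} :
    (degenVert (0 : Fin (m + 1))).comp (faceVert (0 : Fin (m + 2))) = OrderHom.id := by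
  ext k
  simp only [OrderHom.comp_coe, Function.comp_apply, degenVert_apply, faceVert_apply, OrderHom.coe_mk,
    OrderHom.id_coe, id_eq]
  simp only [predAbove_val', succAbove_val', Fin.val_zero, Nat.not_lt_zero, ↓reduceIte]
  split_ifs <;> omega

lemma hvB {m : ℕ} :
    (degenVert (Fin.last m)).comp (faceVert (Fin.last (m + 1))) = OrderHom.id := by
  ext k
  simp only [OrderHom.comp_coe, Function.comp_apply, degenVert_apply, faceVert_apply, OrderHom.coe_mk,
    OrderHom.id_coe, id_eq]
  simp only [predAbove_val', succAbove_val', Fin.val_last]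
  have := k.isLt
  split_ifs <;> omega

lemma hvC {m : ℕ} (j : Fin (m + 1)) (i : Fin (m + 3)) (h : i.val ≤ j.val)
    (h2 : i.val < m + 2) :
    (degenVert j.succ).comp (faceVert i)
      = (faceVert (⟨i.val, h2⟩ : Fin (m + 2))).comp (degenVert j) := by
  ext k
  simp only [OrderHom.comp_coe, Function.comp_apply, degenVert_apply, faceVert_apply, OrderHom.coe_mk]
  simp only [predAbove_val', succAbove_val', Fin.val_succ, Fin.mk_lt_mk]
  split_ifs <;> omega

lemma hvD {m : ℕ} (j : Fin m) :
    (degenVert j.succ).comp (faceVert j.succ.castSucc)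
      = (degenVert j.castSucc).comp (faceVert j.succ.castSucc) := by
  ext k
  simp only [OrderHom.comp_coe, Function.comp_apply, degenVert_apply, faceVert_apply, OrderHom.coe_mk]
  simp only [predAbove_val', succAbove_val', Fin.val_succ, Fin.coe_castSucc]
  split_ifs <;> omega

lemma hvE {m : ℕ} (j : Fin (m + 1)) (i : Fin (m + 3)) (h : j.val + 1 < i.val)
    (h2 : i.val - 1 < m + 2) :
    (degenVert j.castSucc).comp (faceVert i)
      = (faceVert (⟨i.val - 1, h2⟩ : Fin (m + 2))).comp (degenVert j) := by
  ext k
  simp only [OrderHom.comp_coe, Function.comp_apply, degenVert_apply, faceVert_apply, OrderHom.coe_mk]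
  simp only [predAbove_val', succAbove_val', Fin.coe_castSucc]
  split_ifs <;> omega

lemma hvF {m : ℕ} (j : Fin (m + 1)) (i : Fin (m + 2)) (h : i.val ≤ j.val)
    (h2 : i.val < m + 1) :
    (degenVert j).comp (degenVert i)
      = (degenVert (⟨i.val, h2⟩ : Fin (m + 1))).comp (degenVert j.succ) := by
  ext k
  simp only [OrderHom.comp_coe, Function.comp_apply, degenVert_apply, OrderHom.coe_mk]
  simp only [predAbove_val', Fin.val_succ]
  split_ifs <;> omega

lemma hvG {m : ℕ} (j : Fin (m + 1)) (i : Fin (m + 2)) (h : j.val < i.val)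
    (h2 : i.val - 1 < m + 1) :
    (degenVert j).comp (degenVert i)
      = (degenVert (⟨i.val - 1, h2⟩ : Fin (m + 1))).comp (degenVert j.castSucc) := by
  ext k
  simp only [OrderHom.comp_coe, Function.comp_apply, degenVert_apply, OrderHom.coe_mk]
  simp only [predAbove_val', Fin.coe_castSucc]
  split_ifs <;> omega

/-! tail-sum identities -/

lemma hlA {m : ℕ} :
    simplexRingMap (faceVert (0 : Fin (m + 2))) (tailSum (0 : Fin (m + 1)))
      = ((1 : ℤ) : simplexRing m) := by
  rw [simplexRingMap_tailSum]
  rw [show (Finset.univ.filter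
      (fun l : Fin (m + 1) => (0 : Fin (m + 1)).castSucc < faceVert (0 : Fin (m + 2)) l))
      = Finset.univ by
    ext l
    simp only [Finset.mem_filter, Finset.mem_univ, true_and, iff_true, faceVert_apply,
      OrderHom.coe_mk, Fin.lt_def, succAbove_val', Fin.coe_castSucc, Fin.val_zero,
      Nat.not_lt_zero, ↓reduceIte]
    omega]
  rw [Int.cast_one, ← map_one (Ideal.Quotient.mk (simplexIdeal m)),
    Ideal.Quotient.mk_eq_mk_iff_sub_mem]
  have h0 : (1 : MvPolynomial (Fin (m + 1)) ℤ) - ∑ i, X i ∈ simplexIdeal m :=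
    Ideal.subset_span (Set.mem_singleton _)
  have h1 := neg_mem h0
  rwa [neg_sub] at h1

lemma hlB {m : ℕ} :
    simplexRingMap (faceVert (Fin.last (m + 1))) (tailSum (Fin.last m))
      = ((0 : ℤ) : simplexRing m) := by
  rw [simplexRingMap_tailSum]
  rw [show (Finset.univ.filter
      (fun l : Fin (m + 1) => (Fin.last m).castSucc < faceVert (Fin.last (m + 1)) l))
      = (∅ : Finset (Fin (m + 1))) by
    ext l
    simp only [Finset.mem_filter, Finset.mem_univ, true_and, Finset.notMem_empty,
      iff_false, faceVert_apply, OrderHom.coe_mk, Fin.lt_def, succAbove_val', Fin.coe_castSucc,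
      Fin.val_last, not_lt]
    have := l.isLt
    split_ifs <;> omega]
  rw [Finset.sum_empty, map_zero, Int.cast_zero]

lemma hlC {m : ℕ} (j : Fin (m + 1)) (i : Fin (m + 3)) (h : i.val ≤ j.val) :
    simplexRingMap (faceVert i) (tailSum j.succ) = tailSum j := by
  rw [simplexRingMap_tailSum, tailSum]
  congr 1
  refine Finset.sum_congr ?_ fun _ _ => rfl
  apply Finset.filter_congr
  intro l _
  simp only [faceVert_apply, OrderHom.coe_mk, Fin.lt_def, succAbove_val', Fin.coe_castSucc,
    Fin.val_succ]
  split_ifs <;> omega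

lemma hlD {m : ℕ} (j : Fin m) :
    simplexRingMap (faceVert j.succ.castSucc) (tailSum j.succ)
      = simplexRingMap (faceVert j.succ.castSucc) (tailSum j.castSucc) := by
  rw [simplexRingMap_tailSum, simplexRingMap_tailSum]
  congr 1
  refine Finset.sum_congr ?_ fun _ _ => rfl
  apply Finset.filter_congr
  intro l _
  simp only [faceVert_apply, OrderHom.coe_mk, Fin.lt_def, succAbove_val', Fin.coe_castSucc,
    Fin.val_succ]
  split_ifs <;> omega

lemma hlE {m : ℕ} (j : Fin (m + 1)) (i : Fin (m + 3)) (h : j.val + 1 < i.val) :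
    simplexRingMap (faceVert i) (tailSum j.castSucc) = tailSum j := by
  rw [simplexRingMap_tailSum, tailSum]
  congr 1
  refine Finset.sum_congr ?_ fun _ _ => rfl
  apply Finset.filter_congr
  intro l _
  simp only [faceVert_apply, OrderHom.coe_mk, Fin.lt_def, succAbove_val', Fin.coe_castSucc]
  split_ifs <;> omega

lemma hlF {m : ℕ} (j : Fin (m + 1)) (i : Fin (m + 2)) (h : i.val ≤ j.val) :
    simplexRingMap (degenVert i) (tailSum j) = tailSum j.succ := by
  rw [simplexRingMap_tailSum, tailSum]
  congr 1
  refine Finset.sum_congr ?_ fun _ _ => rfl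
  apply Finset.filter_congr
  intro l _
  simp only [degenVert_apply, OrderHom.coe_mk, Fin.lt_def, predAbove_val', Fin.coe_castSucc,
    Fin.val_succ]
  split_ifs <;> omega

lemma hlG {m : ℕ} (j : Fin (m + 1)) (i : Fin (m + 2)) (h : j.val < i.val) :
    simplexRingMap (degenVert i) (tailSum j) = tailSum j.castSucc := by
  rw [simplexRingMap_tailSum, tailSum]
  congr 1
  refine Finset.sum_congr ?_ fun _ _ => rfl
  apply Finset.filter_congr
  intro l _
  simp only [degenVert_apply, OrderHom.coe_mk, Fin.lt_def, predAbove_val', Fin.coe_castSucc]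
  split_ifs <;> omega

end Stmt5Aux

/-- Let `S` be a scheme and `Sch_{/S}` the category of separated finite
type `S`-schemes.  For `m ≥ 0`, `Δ^m_S := S ×_{Spec ℤ} Spec (ℤ[x₀,…,x_m]/(1 − Σ xᵢ))`
assemble into a cosimplicial `S`-scheme.  Let `F` be a presheaf of sets on `Sch_{/S}` and,
for `T ∈ Sch_{/S}`, let `Sus_•(F)(T)` be the simplicial set `m ↦ F(T ×_S Δ^m_S)` (below its
face and degeneracy operators are the functions `d` and `s`).  Let `c : F → p_* p^* F` be a
morphism of presheaves (`p : 𝔸¹_S → S` the projection), i.e. a natural family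
`c_Z : F(Z) → F(Z ×_S 𝔸¹_S)`, and for `x ∈ {0,1}` let `e_x : p_* p^* F → F` be induced by
restriction along the section at `x`.  Assume `e₁ ∘ c = id_F`.  Then for every
`T ∈ Sch_{/S}` the endomorphism of `Sus_•(F)(T)` induced by `e₀ ∘ c` is simplicially
homotopic to the identity: explicitly the maps
`h^j_m := (a^j_m)^* ∘ c_{T×Δ^m} : F(T ×_S Δ^m_S) → F(T ×_S Δ^{m+1}_S)`, where
`a^j_m : Δ^{m+1}_S → Δ^m_S ×_S 𝔸¹_S` is the affine-linear morphism sending `v^{m+1}_k` to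
`(v^m_k, 0)` for `k ≤ j` and `(v^m_{k−1}, 1)` for `k > j`, satisfy the standard simplicial
homotopy identities between the identity and `Sus_•(e₀ ∘ c)(T)`. -/
theorem stmt5 (F : (SchOver S)ᵒᵖ ⥤ Type w)
    -- the contraction `c : F → p_* p^* F`, natural in `Z` :
    (c : ∀ Z : SchOver S, F.obj (op Z) → F.obj (op (TAobj Z)))
    (hc_nat : ∀ {Z' Z : SchOver S} (f : Z' ⟶ Z) (x : F.obj (op Z)),
      c Z' (F.map f.op x) = F.map (TAhom f).op (c Z x))
    -- `e₁ ∘ c` is the identity of `F` :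
    (he1 : ∀ (Z : SchOver S) (x : F.obj (op Z)), F.map (TAsection Z 1).op (c Z x) = x)
    (T : SchOver S)
    -- the homotopy `h^j_m = (a^j_m)^* ∘ c` :
    (h : ∀ (m : ℕ) (j : Fin (m + 1)), F.obj (op (TDobj T m)) → F.obj (op (TDobj T (m + 1))))
    (hdef : ∀ m j x, h m j x = F.map (aHom T j).op (c (TDobj T m) x))
    -- the face and degeneracy operators of `Sus_•(F)(T)` :
    (d : ∀ (m : ℕ) (i : Fin (m + 2)),
      F.obj (op (TDobj T (m + 1))) → F.obj (op (TDobj T m)))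
    (ddef : ∀ m i, d m i = F.map (TDhom T (faceVert i)).op)
    (s : ∀ (m : ℕ) (i : Fin (m + 1)),
      F.obj (op (TDobj T m)) → F.obj (op (TDobj T (m + 1))))
    (sdef : ∀ m i, s m i = F.map (TDhom T (degenVert i)).op)
    -- the endomorphism `Sus_•(e₀ ∘ c)(T)` :
    (u : ∀ m : ℕ, F.obj (op (TDobj T m)) → F.obj (op (TDobj T m)))
    (udef : ∀ m x, u m x = F.map (TAsection (TDobj T m) 0).op (c (TDobj T m) x)) :
    -- the simplicial homotopy identities, from the identity to `Sus_•(e₀ ∘ c)(T)` :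
    (∀ (m : ℕ) (x : F.obj (op (TDobj T m))), d m 0 (h m 0 x) = x) ∧
    (∀ (m : ℕ) (x : F.obj (op (TDobj T m))),
      d m (Fin.last (m + 1)) (h m (Fin.last m) x) = u m x) ∧
    (∀ (m : ℕ) (j : Fin (m + 1)) (i : Fin (m + 3)) (hij : i.val < j.val + 1),
      ∀ x : F.obj (op (TDobj T (m + 1))),
        d (m + 1) i (h (m + 1) j.succ x) = h m j (d m ⟨i.val, by omega⟩ x)) ∧
    (∀ (m : ℕ) (j : Fin m) (x : F.obj (op (TDobj T m))),
      d m j.succ.castSucc (h m j.succ x) = d m j.succ.castSucc (h m j.castSucc x)) ∧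
    (∀ (m : ℕ) (j : Fin (m + 1)) (i : Fin (m + 3)) (hij : j.val + 1 < i.val),
      ∀ x : F.obj (op (TDobj T (m + 1))),
        d (m + 1) i (h (m + 1) j.castSucc x) = h m j (d m ⟨i.val - 1, by omega⟩ x)) ∧
    (∀ (m : ℕ) (j : Fin (m + 1)) (i : Fin (m + 2)) (hij : i.val ≤ j.val),
      ∀ x : F.obj (op (TDobj T m)),
        s (m + 1) i (h m j x) = h (m + 1) j.succ (s m ⟨i.val, by omega⟩ x)) ∧
    (∀ (m : ℕ) (j : Fin (m + 1)) (i : Fin (m + 2)) (hij : j.val < i.val),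
      ∀ x : F.obj (op (TDobj T m)),
        s (m + 1) i (h m j x) = h (m + 1) j.castSucc (s m ⟨i.val - 1, by omega⟩ x)) := by
  refine ⟨?_, ?_, ?_, ?_, ?_, ?_, ?_⟩
  · intro m x
    rw [hdef, ddef, ← FunctorToTypes.map_comp_apply, ← op_comp,
      key2_over T (faceVert 0) 0 1 hvA hlA, he1]
  · intro m x
    rw [hdef, ddef, udef, ← FunctorToTypes.map_comp_apply, ← op_comp,
      key2_over T (faceVert (Fin.last (m + 1))) (Fin.last m) 0 hvB hlB]
  · intro m j i hij x
    have h2 : i.val < m + 2 := by omega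
    rw [hdef, hdef, ddef, ddef, hc_nat, ← FunctorToTypes.map_comp_apply,
      ← FunctorToTypes.map_comp_apply, ← op_comp, ← op_comp,
      key1_over T (faceVert i) j.succ (faceVert ⟨i.val, h2⟩) j
        (hvC j i (by omega) h2) (hlC j i (by omega))]
  · intro m j x
    rw [hdef, hdef, ddef, ← FunctorToTypes.map_comp_apply,
      ← FunctorToTypes.map_comp_apply, ← op_comp, ← op_comp,
      key3_over T (faceVert j.succ.castSucc) (faceVert j.succ.castSucc) j.succ j.castSucc
        (hvD j) (hlD j)]
  · intro m j i hij x
    have h2 : i.val - 1 < m + 2 := by omega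
    rw [hdef, hdef, ddef, ddef, hc_nat, ← FunctorToTypes.map_comp_apply,
      ← FunctorToTypes.map_comp_apply, ← op_comp, ← op_comp,
      key1_over T (faceVert i) j.castSucc (faceVert ⟨i.val - 1, h2⟩) j
        (hvE j i (by omega) h2) (hlE j i (by omega))]
  · intro m j i hij x
    have h2 : i.val < m + 1 := by omega
    rw [hdef, hdef, sdef, sdef, hc_nat, ← FunctorToTypes.map_comp_apply,
      ← FunctorToTypes.map_comp_apply, ← op_comp, ← op_comp,
      key1_over T (degenVert i) j (degenVert ⟨i.val, h2⟩) j.succ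
        (hvF j i (by omega) h2) (hlF j i (by omega))]
  · intro m j i hij x
    have h2 : i.val - 1 < m + 1 := by omega
    rw [hdef, hdef, sdef, sdef, hc_nat, ← FunctorToTypes.map_comp_apply,
      ← FunctorToTypes.map_comp_apply, ← op_comp, ← op_comp,
      key1_over T (degenVert i) j (degenVert ⟨i.val - 1, h2⟩) j.castSucc
        (hvG j i (by omega) h2) (hlG j i (by omega))]

end
end

section
/- Let B be an integral scheme with generic point η, and let V be a locally noetherian scheme equipped with a morphism f : V → B. Let I ⊆ O_V be the ideal sheaf generated by those local sections of O_V whose support is contained in the union of the irreducible components of V that do not dominate B. Then the closed subscheme V(I) ⊆ V has underlying topological space equal to the closure in V of the generic fiber f⁻¹(η), which coincides with the union of the irreducible components of V that dominate B. -/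
open CategoryTheory AlgebraicGeometry TopologicalSpace Opposite Set

section Aux


/-- Every irreducible set is contained in an irreducible component. -/
lemma stmt7_aux_subset_component {X : Type*} [TopologicalSpace X] {s : Set X}
    (hs : IsIrreducible s) : ∃ C ∈ irreducibleComponents X, s ⊆ C := by
  obtain ⟨t, ht, hst, hmax⟩ := exists_preirreducible s hs.2
  exact ⟨t, ⟨⟨hs.1.mono hst, ht⟩, fun u hu htu => (hmax u hu.2 htu).le⟩, hst⟩

/-- In a locally noetherian scheme, the irreducible components form a locally finite family. -/
lemma stmt7_aux_locallyFinite (V : Scheme) [IsLocallyNoetherian V] :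
    LocallyFinite (fun C : irreducibleComponents (V : Type _) => (C : Set V)) := by
  intro x
  obtain ⟨U, hU, hxU, -⟩ := Opens.isBasis_iff_nbhd.mp V.isBasis_affineOpens
    (show x ∈ (⊤ : V.Opens) from trivial)
  refine ⟨U, U.isOpen.mem_nhds hxU, ?_⟩
  haveI : IsNoetherianRing Γ(V, U) := IsLocallyNoetherian.component_noetherian ⟨U, hU⟩
  haveI : NoetherianSpace U := noetherianSpace_of_isAffineOpen U hU
  have key : ∀ C : irreducibleComponents (V : Type _), ((C : Set V) ∩ ↑U).Nonempty →
      ∃ D ∈ irreducibleComponents (U : Type _),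
        (C : Set V) = closure (Subtype.val '' D) := by
    intro C hne
    have hSne : (Subtype.val ⁻¹' (C : Set V) : Set U).Nonempty := by
      obtain ⟨y, hyC, hyU⟩ := hne
      exact ⟨⟨y, hyU⟩, hyC⟩
    have hSpre : IsPreirreducible (Subtype.val ⁻¹' (C : Set V) : Set U) :=
      C.2.1.2.preimage U.isOpenEmbedding'
    obtain ⟨D, hD, hSD, hmax⟩ := exists_preirreducible _ hSpre
    refine ⟨D, ⟨⟨hSne.mono hSD, hD⟩, fun u hu htu => (hmax u hu.2 htu).le⟩, ?_⟩
    have hval : (Subtype.val '' (Subtype.val ⁻¹' (C : Set V) : Set U)) = (C : Set V) ∩ ↑U := by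
      ext y; constructor
      · rintro ⟨z, hz, rfl⟩; exact ⟨hz, z.2⟩
      · rintro ⟨hy, hyU⟩; exact ⟨⟨y, hyU⟩, hy, rfl⟩
    have h1 : (C : Set V) ⊆ closure (Subtype.val '' D) := by
      refine (subset_closure_inter_of_isPreirreducible_of_isOpen C.2.1.2 U.isOpen
        hne).trans ?_
      rw [← hval]
      exact closure_mono (Set.image_mono hSD)
    have h2 : IsIrreducible (closure (Subtype.val '' D)) := by
      refine IsIrreducible.closure (IsIrreducible.image ⟨hSne.mono hSD, hD⟩ _
        continuous_subtype_val.continuousOn)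
    exact subset_antisymm h1 (C.2.2 h2 h1)
  have hfin : (irreducibleComponents (U : Type _)).Finite :=
    NoetherianSpace.finite_irreducibleComponents
  have him : (Subtype.val '' {C : irreducibleComponents (V : Type _) |
      ((C : Set V) ∩ ↑U).Nonempty}).Finite := by
    refine Set.Finite.subset (hfin.image (fun D : Set U => closure (Subtype.val '' D))) ?_
    rintro _ ⟨C, hC, rfl⟩
    obtain ⟨D, hD, hCD⟩ := key C hC
    exact ⟨D, hD, hCD.symm⟩
  exact Set.Finite.subset (him.preimage (Subtype.val_injective.injOn))
    (fun C hC => Set.mem_preimage.mpr (Set.mem_image_of_mem _ hC))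

/-- The union of any subfamily of irreducible components of a locally noetherian scheme is
closed. -/
lemma stmt7_aux_isClosed_sUnion (V : Scheme) [IsLocallyNoetherian V]
    {S : Set (Set V)} (hS : S ⊆ irreducibleComponents (V : Type _)) :
    IsClosed (⋃₀ S) := by
  rw [Set.sUnion_eq_iUnion]
  refine LocallyFinite.isClosed_iUnion ?_
    (fun i => isClosed_of_mem_irreducibleComponents _ (hS i.2))
  exact (stmt7_aux_locallyFinite V).comp_injective
    (g := fun i : S => (⟨i.1, hS i.2⟩ : irreducibleComponents (V : Type _)))
    (fun a b h => Subtype.ext (by simpa using congrArg Subtype.val h))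

end Aux

/-- Let `B` be an integral scheme with generic point `η` and let `V` be a
locally noetherian scheme with a morphism `f : V ⟶ B`.  Let `I ⊆ O_V` be the ideal sheaf
generated by the local sections of `O_V` whose support is contained in the union `Bad` of the
irreducible components of `V` that do not dominate `B` (a component dominates `B` iff the
closure of its image is all of `B`).  Then the closed subscheme `V(I) ⊆ V` — whose underlying
space is the set of points `x` at which the ideal of `O_{V,x}` generated by germs of such
sections is not the unit ideal — has underlying topological space equal to the closure in `V`
of the generic fiber `f⁻¹(η)`, which coincides with the union of the irreducible components
of `V` dominating `B`. -/
theorem stmt7 (V B : Scheme) [IsLocallyNoetherian V] [IsIntegral B] (f : V ⟶ B) :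
    -- the generic point of `B`
    ∀ η : B, (IsGenericPoint η Set.univ) →
    -- the union of the irreducible components of `V` which do not dominate `B`
    ∀ Bad : Set V, Bad = ⋃₀ {C ∈ irreducibleComponents (V : Type _) | ¬ Dense (f.base '' C)} →
    -- the underlying space of `V(I)`: the locus where the stalkwise ideal generated by germs of
    -- sections supported in `Bad` is not the unit ideal
    {x : V | (Ideal.span {g : V.presheaf.stalk x |
        ∃ (U : V.Opens) (hx : x ∈ U) (s : V.presheaf.obj (op U)),
          (∀ y, ∀ hy : y ∈ U, V.presheaf.germ U y hy s ≠ 0 → y ∈ Bad) ∧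
          g = V.presheaf.germ U x hx s} ≠ ⊤)} =
      closure (f.base ⁻¹' {η}) ∧
    closure (f.base ⁻¹' {η}) =
      ⋃₀ {C ∈ irreducibleComponents (V : Type _) | Dense (f.base '' C)} := by
  intro η hη Bad hBad
  have hcont : Continuous f.base := f.base.hom.continuous
  set Good : Set V := ⋃₀ {C ∈ irreducibleComponents (V : Type _) | Dense (f.base '' C)}
    with hGoodDef
  have hGoodClosed : IsClosed Good :=
    stmt7_aux_isClosed_sUnion V (fun C hC => hC.1)
  have cover : ∀ x : V, x ∈ Bad ∪ Good := by
    intro x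
    by_cases h : Dense (f.base '' irreducibleComponent x)
    · exact Or.inr ⟨_, ⟨irreducibleComponent_mem_irreducibleComponents x, h⟩,
        mem_irreducibleComponent⟩
    · exact Or.inl (hBad ▸ ⟨_, ⟨irreducibleComponent_mem_irreducibleComponents x, h⟩,
        mem_irreducibleComponent⟩)
  -- second claim
  have h2 : closure (f.base ⁻¹' {η}) = Good := by
    apply subset_antisymm
    · refine closure_minimal ?_ hGoodClosed
      intro x hx
      simp only [Set.mem_preimage, Set.mem_singleton_iff] at hx
      obtain ⟨C, hC, hxC⟩ :=
        stmt7_aux_subset_component (isIrreducible_singleton (x := x)).closure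
      have hxC' : x ∈ C := hxC (subset_closure rfl)
      refine ⟨C, ⟨hC, ?_⟩, hxC'⟩
      rw [dense_iff_closure_eq, ← Set.univ_subset_iff]
      calc Set.univ = closure {η} := hη.symm
        _ ⊆ closure (f.base '' C) :=
            closure_mono (Set.singleton_subset_iff.mpr ⟨x, hxC', hx⟩)
    · rintro x ⟨C, ⟨hC, hdense⟩, hxC⟩
      have hCcl : IsClosed C := isClosed_of_mem_irreducibleComponents _ hC
      have hgen := hC.1.isGenericPoint_genericPoint hCcl
      have himg : IsGenericPoint (f.base hC.1.genericPoint) Set.univ := by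
        have := hgen.image hcont
        rwa [hdense.closure_eq] at this
      have hfξ : f.base hC.1.genericPoint = η := himg.eq hη
      have : C ⊆ closure (f.base ⁻¹' {η}) := by
        rw [← hgen]
        exact closure_mono (Set.singleton_subset_iff.mpr (by simp [hfξ]))
      exact this hxC
  refine ⟨?_, h2⟩
  -- span = ⊤ ↔ x ∈ interior Bad
  have hIB : ∀ x : V, (Ideal.span {g : V.presheaf.stalk x |
        ∃ (U : V.Opens) (hx : x ∈ U) (s : V.presheaf.obj (op U)),
          (∀ y, ∀ hy : y ∈ U, V.presheaf.germ U y hy s ≠ 0 → y ∈ Bad) ∧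
          g = V.presheaf.germ U x hx s} = ⊤) ↔ x ∈ interior Bad := by
    intro x
    constructor
    · intro htop
      let J : Ideal (V.presheaf.stalk x) :=
        { carrier := {g : V.presheaf.stalk x |
            ∃ (U : V.Opens) (hx : x ∈ U) (s : V.presheaf.obj (op U)),
              (∀ y, ∀ hy : y ∈ U, V.presheaf.germ U y hy s ≠ 0 → y ∈ Bad) ∧
              g = V.presheaf.germ U x hx s}
          zero_mem' := ⟨⊤, trivial, 0, fun y hy h => absurd (map_zero _) h, (map_zero _).symm⟩
          add_mem' := by
            rintro a b ⟨U₁, hx₁, s₁, hs₁, rfl⟩ ⟨U₂, hx₂, s₂, hs₂, rfl⟩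
            refine ⟨U₁ ⊓ U₂, (show x ∈ U₁ ⊓ U₂ from ⟨hx₁, hx₂⟩),
              V.presheaf.map (homOfLE inf_le_left).op s₁ +
                V.presheaf.map (homOfLE inf_le_right).op s₂, ?_, ?_⟩
            · intro y hy hne
              rw [map_add] at hne
              have h12 : V.presheaf.germ (U₁ ⊓ U₂) y hy
                    (V.presheaf.map (homOfLE inf_le_left).op s₁) ≠ 0 ∨
                  V.presheaf.germ (U₁ ⊓ U₂) y hy
                    (V.presheaf.map (homOfLE inf_le_right).op s₂) ≠ 0 := by
                by_contra h
                push_neg at h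
                rw [h.1, h.2, add_zero] at hne
                exact hne rfl
              rcases h12 with h | h
              · rw [TopCat.Presheaf.germ_res_apply] at h
                exact hs₁ y _ h
              · rw [TopCat.Presheaf.germ_res_apply] at h
                exact hs₂ y _ h
            · rw [map_add, TopCat.Presheaf.germ_res_apply, TopCat.Presheaf.germ_res_apply]
          smul_mem' := by
            rintro c g ⟨U₁, hx₁, s₁, hs₁, rfl⟩
            obtain ⟨W, hxW, t, ht⟩ := TopCat.Presheaf.germ_exist V.presheaf c
            refine ⟨W ⊓ U₁, (show x ∈ W ⊓ U₁ from ⟨hxW, hx₁⟩),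
              V.presheaf.map (homOfLE inf_le_left).op t *
                V.presheaf.map (homOfLE inf_le_right).op s₁, ?_, ?_⟩
            · intro y hy hne
              rw [map_mul] at hne
              have h1 : V.presheaf.germ (W ⊓ U₁) y hy
                  (V.presheaf.map (homOfLE inf_le_right).op s₁) ≠ 0 := by
                intro h0
                rw [h0, mul_zero] at hne
                exact hne rfl
              rw [TopCat.Presheaf.germ_res_apply] at h1
              exact hs₁ y _ h1
            · rw [smul_eq_mul, map_mul, TopCat.Presheaf.germ_res_apply,
                TopCat.Presheaf.germ_res_apply, ht] }
      have hspan : Ideal.span {g : V.presheaf.stalk x |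
            ∃ (U : V.Opens) (hx : x ∈ U) (s : V.presheaf.obj (op U)),
              (∀ y, ∀ hy : y ∈ U, V.presheaf.germ U y hy s ≠ 0 → y ∈ Bad) ∧
              g = V.presheaf.germ U x hx s} = J :=
        le_antisymm (Ideal.span_le.mpr (fun g hg => hg)) Ideal.subset_span
      rw [hspan] at htop
      have hone : (1 : V.presheaf.stalk x) ∈ J := htop ▸ Submodule.mem_top
      obtain ⟨U, hxU, s, hs, h1⟩ := hone
      have h1' : V.presheaf.germ U x hxU s = V.presheaf.germ U x hxU 1 := by
        rw [map_one, ← h1]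
      obtain ⟨W, hxW, iU, iV, heq⟩ := TopCat.Presheaf.germ_eq V.presheaf x hxU hxU s 1 h1'
      rw [map_one] at heq
      refine mem_interior.mpr ⟨W, ?_, W.isOpen, hxW⟩
      intro y hy
      refine hs y (iU.le hy) ?_
      rw [← TopCat.Presheaf.germ_res_apply V.presheaf iU y hy s, heq, map_one]
      exact one_ne_zero
    · intro hx
      rw [Ideal.eq_top_iff_one]
      exact Ideal.subset_span ⟨⟨interior Bad, isOpen_interior⟩, hx, 1,
        fun y hy h => interior_subset hy, (map_one _).symm⟩
  -- Good = (interior Bad)ᶜ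
  have hGoodEq : Good = (interior Bad)ᶜ := by
    apply subset_antisymm
    · rintro x ⟨C, ⟨hC, hdense⟩, hxC⟩ hxint
      have hCcl : IsClosed C := isClosed_of_mem_irreducibleComponents _ hC
      have hgen := hC.1.isGenericPoint_genericPoint hCcl
      have hxcl : x ∈ closure ({hC.1.genericPoint} : Set V) := hgen.symm ▸ hxC
      obtain ⟨z, hz, hz'⟩ := mem_closure_iff.mp hxcl _ isOpen_interior hxint
      have hξ : hC.1.genericPoint ∈ Bad := interior_subset (hz' ▸ hz)
      rw [hBad] at hξ
      obtain ⟨C', ⟨hC', hnd⟩, hξC'⟩ := hξ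
      have hCC' : C ⊆ C' := by
        rw [← hgen]
        exact closure_minimal (Set.singleton_subset_iff.mpr hξC')
          (isClosed_of_mem_irreducibleComponents _ hC')
      have : C' = C := le_antisymm (hC.2 hC'.1 hCC') hCC'
      exact hnd (this ▸ hdense)
    · intro x hx
      by_contra hxG
      exact hx (interior_maximal (fun y hy => (cover y).resolve_right hy)
        hGoodClosed.isOpen_compl hxG)
  ext x
  simp only [Set.mem_setOf_eq]
  rw [h2, hGoodEq, Set.mem_compl_iff]
  exact not_iff_not.mpr (hIB x)
end
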